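/- For A-bimodule homomorphisms K: Ω₁(A) → Ω_k(A) and L: Ω₁(A) → Ω_ℓ(A) one has [[𝓛_K, 𝓛_L], d] = 0; hence there is a unique [K,L] ∈ Ω¹_{k+ℓ}(A) = Hom^A_A(Ω₁(A), Ω_{k+ℓ}(A)), the abstract Frölicher–Nijenhuis bracket, with 𝓛([K,L]) = [𝓛(K), 𝓛(L)], and this bracket makes Ω¹_*(A) = ⊕_k Hom^A_A(Ω₁(A), Ω_k(A)) into a graded Lie algebra. -/

import Mathlib

noncomputable section

namespace NCDG

variable (K : Type) [Field K] (A : Type) [Ring A] [Algebra K A]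

/-- The defining relations of the algebra `Ω(A)` of universal differential forms:
it is generated by the elements of `A` (first summand) together with symbols `d a`
(second summand), subject to the requirements that `A → Ω(A)` is a unital algebra
homomorphism, `d` is `K`-linear, and `d` satisfies the Leibniz rule on `A`. -/
inductive Rel : FreeAlgebra K (A ⊕ A) → FreeAlgebra K (A ⊕ A) → Prop
  | add_coe (a b : A) : Rel (FreeAlgebra.ι K (Sum.inl (a + b)))
      (FreeAlgebra.ι K (Sum.inl a) + FreeAlgebra.ι K (Sum.inl b))
  | smul_coe (c : K) (a : A) : Rel (FreeAlgebra.ι K (Sum.inl (c • a)))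
      (c • FreeAlgebra.ι K (Sum.inl a))
  | mul_coe (a b : A) : Rel (FreeAlgebra.ι K (Sum.inl (a * b)))
      (FreeAlgebra.ι K (Sum.inl a) * FreeAlgebra.ι K (Sum.inl b))
  | one_coe : Rel (FreeAlgebra.ι K (Sum.inl 1)) 1
  | add_d (a b : A) : Rel (FreeAlgebra.ι K (Sum.inr (a + b)))
      (FreeAlgebra.ι K (Sum.inr a) + FreeAlgebra.ι K (Sum.inr b))
  | smul_d (c : K) (a : A) : Rel (FreeAlgebra.ι K (Sum.inr (c • a)))
      (c • FreeAlgebra.ι K (Sum.inr a))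
  | leibniz (a b : A) : Rel (FreeAlgebra.ι K (Sum.inr (a * b)))
      (FreeAlgebra.ι K (Sum.inr a) * FreeAlgebra.ι K (Sum.inl b) +
        FreeAlgebra.ι K (Sum.inl a) * FreeAlgebra.ι K (Sum.inr b))

/-- The algebra `Ω(A)` of universal differential forms over `A`. -/
abbrev Omega := RingQuot (Rel K A)

/-- The canonical inclusion `A → Ω(A)` (onto the degree-zero part `Ω₀(A) = A`). -/
def jA (a : A) : Omega K A := RingQuot.mkAlgHom K (Rel K A) (FreeAlgebra.ι K (Sum.inl a))

/-- The universal differential applied to an element of `A`, i.e. `d a ∈ Ω₁(A)`. -/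
def dA (a : A) : Omega K A := RingQuot.mkAlgHom K (Rel K A) (FreeAlgebra.ι K (Sum.inr a))

lemma jA_add (a b : A) : jA K A (a + b) = jA K A a + jA K A b := by
  simpa [jA, map_add] using RingQuot.mkAlgHom_rel K (Rel.add_coe (K := K) (A := A) a b)

lemma jA_smul (c : K) (a : A) : jA K A (c • a) = c • jA K A a := by
  simpa [jA, map_smul] using RingQuot.mkAlgHom_rel K (Rel.smul_coe (K := K) (A := A) c a)

lemma jA_mul (a b : A) : jA K A (a * b) = jA K A a * jA K A b := by
  simpa [jA, map_mul] using RingQuot.mkAlgHom_rel K (Rel.mul_coe (K := K) (A := A) a b)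

lemma jA_one : jA K A 1 = 1 := by
  simpa [jA, map_one] using RingQuot.mkAlgHom_rel K (Rel.one_coe (K := K) (A := A))

lemma dA_add (a b : A) : dA K A (a + b) = dA K A a + dA K A b := by
  simpa [dA, map_add] using RingQuot.mkAlgHom_rel K (Rel.add_d (K := K) (A := A) a b)

lemma dA_smul (c : K) (a : A) : dA K A (c • a) = c • dA K A a := by
  simpa [dA, map_smul] using RingQuot.mkAlgHom_rel K (Rel.smul_d (K := K) (A := A) c a)

lemma dA_leibniz (a b : A) :
    dA K A (a * b) = dA K A a * jA K A b + jA K A a * dA K A b := by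
  simpa [jA, dA, map_mul, map_add] using
    RingQuot.mkAlgHom_rel K (Rel.leibniz (K := K) (A := A) a b)

lemma dA_one : dA K A 1 = 0 := by
  have h := dA_leibniz K A 1 1
  simp only [jA_one, mul_one, one_mul] at h
  exact (left_eq_add.mp h)

/-- The space `Ωₙ(A)` of `n`-forms: the linear span of the monomials
`a₀ ⬝ d a₁ ⬝ ⋯ ⬝ d aₙ`. -/
def OmegaDeg (n : ℕ) : Submodule K (Omega K A) :=
  Submodule.span K
    {x | ∃ (a : A) (l : List A), l.length = n ∧ x = jA K A a * (l.map (dA K A)).prod}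

/-- The spaces `Ωₙ(A)` indexed by the integers (zero in negative degrees). -/
def OmegaDegZ (n : ℤ) : Submodule K (Omega K A) :=
  if 0 ≤ n then OmegaDeg K A n.toNat else ⊥

open Matrix in
/-- Auxiliary algebra homomorphism used to construct the universal differential `d`
on `Ω(A)`: `x ↦ !![σ x, d x; 0, x]` on generators, where `σ` is the parity involution. -/
def PhiFree : FreeAlgebra K (A ⊕ A) →ₐ[K] Matrix (Fin 2) (Fin 2) (Omega K A) :=
  FreeAlgebra.lift K (Sum.elim
    (fun a => !![jA K A a, dA K A a; 0, jA K A a])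
    (fun a => !![-(dA K A a), 0; 0, dA K A a]))

private lemma leib_matrix {R : Type} [Ring R] (ja da jb db dab : R)
    (h : dab = da * jb + ja * db) :
    !![-dab, 0; 0, dab] =
      !![-da, 0; 0, da] * !![jb, db; 0, jb] + !![ja, da; 0, ja] * !![-db, 0; 0, db] := by
  subst h
  rw [Matrix.mul_fin_two, Matrix.mul_fin_two]
  ext i j
  fin_cases i <;> fin_cases j <;> simp <;> abel

lemma phiFree_rel : ∀ ⦃x y : FreeAlgebra K (A ⊕ A)⦄, Rel K A x y →
    PhiFree K A x = PhiFree K A y := by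
  rintro x y h
  cases h with
  | leibniz a b =>
      simp only [PhiFree, map_mul, map_add, FreeAlgebra.lift_ι_apply, Sum.elim_inl,
        Sum.elim_inr]
      exact leib_matrix _ _ _ _ _ (dA_leibniz K A a b)
  | mul_coe a b =>
      simp only [PhiFree, map_mul, FreeAlgebra.lift_ι_apply, Sum.elim_inl]
      rw [Matrix.mul_fin_two]
      ext i j
      fin_cases i <;> fin_cases j <;>
        simp [jA_mul, dA_leibniz] <;> abel
  | add_coe a b =>
      ext i j
      fin_cases i <;> fin_cases j <;>
        simp [PhiFree, FreeAlgebra.lift_ι_apply, map_add, jA_add, dA_add]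
  | smul_coe c a =>
      ext i j
      fin_cases i <;> fin_cases j <;>
        simp [PhiFree, FreeAlgebra.lift_ι_apply, map_smul, jA_smul, dA_smul]
  | one_coe =>
      ext i j
      fin_cases i <;> fin_cases j <;>
        simp [PhiFree, FreeAlgebra.lift_ι_apply, map_one, jA_one, dA_one, Matrix.one_apply]
  | add_d a b =>
      ext i j
      fin_cases i <;> fin_cases j <;>
        simp [PhiFree, FreeAlgebra.lift_ι_apply, map_add, dA_add] <;> abel
  | smul_d c a =>
      ext i j
      fin_cases i <;> fin_cases j <;>
        simp [PhiFree, FreeAlgebra.lift_ι_apply, map_smul, dA_smul]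

/-- The homomorphism `Ω(A) → M₂(Ω(A))`, `x ↦ !![σ x, d x; 0, x]`, defining the
universal differential. -/
def Phi : Omega K A →ₐ[K] Matrix (Fin 2) (Fin 2) (Omega K A) :=
  RingQuot.liftAlgHom K ⟨PhiFree K A, phiFree_rel K A⟩

/-- The universal differential `d : Ω(A) → Ω(A)`. -/
def dOm : Omega K A →ₗ[K] Omega K A where
  toFun x := Phi K A x 0 1
  map_add' x y := by simp [map_add]
  map_smul' c x := by simp [map_smul]


/-- The graded commutator `[D₁, D₂] = D₁ ∘ D₂ - (-1)^{k₁ k₂} D₂ ∘ D₁` of two (degree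
`k₁` resp. `k₂`) operators on `Ω(A)`. -/
def gcomm (k₁ k₂ : ℤ) (D₁ D₂ : Omega K A →ₗ[K] Omega K A) :
    Omega K A →ₗ[K] Omega K A :=
  D₁ ∘ₗ D₂ - ((-1 : K) ^ (k₁ * k₂)) • (D₂ ∘ₗ D₁)

/-- A graded derivation of degree `k` of `Ω(A)`: it raises degrees by `k` and satisfies
the graded Leibniz rule. -/
def IsGDer (k : ℤ) (D : Omega K A →ₗ[K] Omega K A) : Prop :=
  (∀ n : ℤ, ∀ x ∈ OmegaDegZ K A n, D x ∈ OmegaDegZ K A (k + n)) ∧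
  (∀ (n : ℤ) (x y : Omega K A), x ∈ OmegaDegZ K A n →
    D (x * y) = D x * y + ((-1 : K) ^ (k * n)) • (x * D y))

/-- A derivation is algebraic if it vanishes on `Ω₀(A) = A`. -/
def IsAlgebraic (D : Omega K A →ₗ[K] Omega K A) : Prop :=
  ∀ x ∈ OmegaDegZ K A 0, D x = 0

/-- `f` represents an element of `Ω¹_k(A) = Hom^A_A(Ω₁(A), Ω_k(A))`: an `A`-bimodule
homomorphism `Ω₁(A) → Ω_k(A)`, extended by zero to the other homogeneous components. -/
def IsOneFormValued (k : ℤ) (f : Omega K A →ₗ[K] Omega K A) : Prop :=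
  (∀ n : ℤ, n ≠ 1 → ∀ ω ∈ OmegaDegZ K A n, f ω = 0) ∧
  (∀ ω ∈ OmegaDegZ K A 1, f ω ∈ OmegaDegZ K A k) ∧
  (∀ (a : A), ∀ ω ∈ OmegaDegZ K A 1,
    f (jA K A a * ω) = jA K A a * f ω ∧ f (ω * jA K A a) = f ω * jA K A a)

/-- `JPair k f D` means: `f ∈ Ω¹_k(A)` and `D = j_f` is the associated algebraic graded
derivation of degree `k - 1` (the unique algebraic derivation restricting to `f` on
`Ω₁(A)`). -/
def JPair (k : ℤ) (f D : Omega K A →ₗ[K] Omega K A) : Prop :=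
  IsOneFormValued K A k f ∧ IsGDer K A (k - 1) D ∧ IsAlgebraic K A D ∧
  ∀ ω ∈ OmegaDegZ K A 1, D ω = f ω

/-- `LPair k f D` means: `f ∈ Ω¹_k(A)` and `D = 𝓛_f = [j_f, d]` is the associated Lie
derivative along `f`, a graded derivation of degree `k`. -/
def LPair (k : ℤ) (f D : Omega K A →ₗ[K] Omega K A) : Prop :=
  ∃ Df, JPair K A k f Df ∧ D = gcomm K A (k - 1) 1 Df (dOm K A)

/-- `FNB k l f g h` means: `f ∈ Ω¹_k(A)`, `g ∈ Ω¹_l(A)` and `h = [f, g] ∈ Ω¹_{k+l}(A)`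
is their abstract Frölicher–Nijenhuis bracket, i.e. `𝓛_h = [𝓛_f, 𝓛_g]`. -/
def FNB (k l : ℤ) (f g h : Omega K A →ₗ[K] Omega K A) : Prop :=
  ∃ Lf Lg Lh, LPair K A k f Lf ∧ LPair K A l g Lg ∧ LPair K A (k + l) h Lh ∧
    Lh = gcomm K A k l Lf Lg


section OmegaOps

lemma osmul_mul (c : K) (x y : Omega K A) : (c • x) * y = c • (x * y) :=
  smul_mul_assoc c x y

lemma omul_smul (c : K) (x y : Omega K A) : x * (c • y) = c • (x * y) :=
  mul_smul_comm c x y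

lemma osmul_smul (c d : K) (x : Omega K A) : c • (d • x) = (c * d) • x :=
  smul_smul c d x

lemma osmul_add (c : K) (x y : Omega K A) : c • (x + y) = c • x + c • y :=
  smul_add c x y

lemma oadd_smul (c d : K) (x : Omega K A) : (c + d) • x = c • x + d • x :=
  add_smul c d x

lemma oone_smul (x : Omega K A) : (1 : K) • x = x := one_smul K x

lemma ozero_smul (x : Omega K A) : (0 : K) • x = 0 := zero_smul K x

lemma osmul_zero (c : K) : c • (0 : Omega K A) = 0 := smul_zero c

lemma oneg_eq (x : Omega K A) : -x = (-1 : K) • x := (neg_one_smul K x).symm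

lemma osub_eq (x y : Omega K A) : x - y = x + (-1 : K) • y := by
  rw [sub_eq_add_neg, oneg_eq]

lemma lsmul (c : K) (D : Omega K A →ₗ[K] Omega K A) (x : Omega K A) :
    D (c • x) = c • D x := map_smul D c x

lemma lsmul_apply (c : K) (D : Omega K A →ₗ[K] Omega K A) (x : Omega K A) :
    (c • D) x = c • D x := LinearMap.smul_apply c D x

lemma asmul {B : Type} [Semiring B] [Algebra K B] (f : Omega K A →ₐ[K] B)
    (c : K) (x : Omega K A) : f (c • x) = c • f x := map_smul f c x

end OmegaOps
section MoreOps
lemma osub_mul (x y z : Omega K A) : (x - y) * z = x * z - y * z := sub_mul x y z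
lemma omul_sub (x y z : Omega K A) : x * (y - z) = x * y - x * z := mul_sub x y z
lemma osmul_sub (c : K) (x y : Omega K A) : c • (x - y) = c • x - c • y := smul_sub c x y
lemma olmap_sub (D : Omega K A →ₗ[K] Omega K A) (x y : Omega K A) :
    D (x - y) = D x - D y := map_sub D x y
end MoreOps

lemma omega_induction {P : Omega K A → Prop}
    (halg : ∀ r : K, P (algebraMap K (Omega K A) r))
    (hj : ∀ a : A, P (jA K A a)) (hd : ∀ a : A, P (dA K A a))
    (hadd : ∀ x y, P x → P y → P (x + y))
    (hmul : ∀ x y, P x → P y → P (x * y)) : ∀ x, P x := by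
  intro x
  obtain ⟨y, rfl⟩ := RingQuot.mkAlgHom_surjective K (Rel K A) x
  induction y using FreeAlgebra.induction with
  | grade0 r => rw [AlgHom.commutes]; exact halg r
  | grade1 z =>
      cases z with
      | inl a => exact hj a
      | inr a => exact hd a
  | mul x y hx hy => rw [map_mul]; exact hmul _ _ hx hy
  | add x y hx hy => rw [map_add]; exact hadd _ _ hx hy

/-- The free version of the parity-type twist `ε_s : jA a ↦ jA a, dA a ↦ s • dA a`. -/
def epsFree (s : K) : FreeAlgebra K (A ⊕ A) →ₐ[K] Omega K A :=
  FreeAlgebra.lift K (Sum.elim (fun a => jA K A a) (fun a => s • dA K A a))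

lemma epsFree_rel (s : K) : ∀ ⦃x y : FreeAlgebra K (A ⊕ A)⦄, Rel K A x y →
    epsFree K A s x = epsFree K A s y := by
  rintro x y h
  cases h with
  | add_coe a b => simp [epsFree, jA_add]
  | smul_coe c a => simp [epsFree, jA_smul]
  | mul_coe a b => simp [epsFree, jA_mul]
  | one_coe => simp [epsFree, jA_one]
  | add_d a b => simp [epsFree, dA_add, smul_add]
  | smul_d c a => simp [epsFree, dA_smul, smul_comm c s]
  | leibniz a b =>
      simp only [epsFree, map_mul, map_add, FreeAlgebra.lift_ι_apply, Sum.elim_inl,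
        Sum.elim_inr, dA_leibniz, smul_add, smul_mul_assoc, mul_smul_comm]

/-- The twist `ε_s`. -/
def eps (s : K) : Omega K A →ₐ[K] Omega K A :=
  RingQuot.liftAlgHom K ⟨epsFree K A s, epsFree_rel K A s⟩

@[simp] lemma eps_jA (s : K) (a : A) : eps K A s (jA K A a) = jA K A a := by
  rw [jA, eps, RingQuot.liftAlgHom_mkAlgHom_apply]; simp [epsFree, jA]

@[simp] lemma eps_dA (s : K) (a : A) : eps K A s (dA K A a) = s • dA K A a := by
  rw [dA, eps, RingQuot.liftAlgHom_mkAlgHom_apply]; simp [epsFree, dA]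

lemma Phi_jA (a : A) : Phi K A (jA K A a) = !![jA K A a, dA K A a; 0, jA K A a] := by
  rw [jA, Phi, RingQuot.liftAlgHom_mkAlgHom_apply]; simp [PhiFree, jA, dA]

lemma Phi_dA (a : A) : Phi K A (dA K A a) = !![-(dA K A a), 0; 0, dA K A a] := by
  rw [dA, Phi, RingQuot.liftAlgHom_mkAlgHom_apply]; simp [PhiFree, dA]

lemma Phi_entries (x : Omega K A) :
    Phi K A x 1 0 = 0 ∧ Phi K A x 1 1 = x ∧ Phi K A x 0 0 = eps K A (-1) x := by
  induction x using omega_induction with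
  | halg r =>
      rw [AlgHom.commutes, AlgHom.commutes]
      simp [Matrix.algebraMap_matrix_apply]
  | hj a => simp [Phi_jA]
  | hd a => simp [Phi_dA, eps_dA, oneg_eq]
  | hadd x y hx hy =>
      obtain ⟨h1, h2, h3⟩ := hx; obtain ⟨g1, g2, g3⟩ := hy
      simp [map_add, Matrix.add_apply, h1, h2, h3, g1, g2, g3]
  | hmul x y hx hy =>
      obtain ⟨h1, h2, h3⟩ := hx; obtain ⟨g1, g2, g3⟩ := hy
      simp [map_mul, Matrix.mul_apply, Fin.sum_univ_two, h1, h2, h3, g1, g2, g3]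

lemma dOm_apply (x : Omega K A) : dOm K A x = Phi K A x 0 1 := rfl

@[simp] lemma dOm_jA (a : A) : dOm K A (jA K A a) = dA K A a := by
  rw [dOm_apply, Phi_jA]; simp

@[simp] lemma dOm_dA (a : A) : dOm K A (dA K A a) = 0 := by
  rw [dOm_apply, Phi_dA]; simp

@[simp] lemma dOm_one : dOm K A (1 : Omega K A) = 0 := by
  rw [dOm_apply, map_one]; simp [Matrix.one_apply]

lemma dOm_mul (x y : Omega K A) :
    dOm K A (x * y) = dOm K A x * y + eps K A (-1) x * dOm K A y := by
  rw [dOm_apply, map_mul, Matrix.mul_apply, Fin.sum_univ_two, ← dOm_apply, ← dOm_apply,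
    (Phi_entries K A x).2.2, (Phi_entries K A y).2.1]
  exact add_comm _ _

lemma dd_eps (x : Omega K A) :
    dOm K A (dOm K A x) = 0 ∧
      eps K A (-1) (dOm K A x) + dOm K A (eps K A (-1) x) = 0 := by
  induction x using omega_induction with
  | halg r =>
      have h0 : dOm K A (algebraMap K (Omega K A) r) = 0 := by
        rw [dOm_apply, AlgHom.commutes]
        simp [Matrix.algebraMap_matrix_apply]
      rw [h0, AlgHom.commutes]
      simp [h0]
  | hj a =>
      refine ⟨by simp, ?_⟩
      rw [dOm_jA, eps_dA, eps_jA, dOm_jA, ← oneg_eq]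
      exact neg_add_cancel _
  | hd a => simp [smul_smul]
  | hadd x y hx hy =>
      obtain ⟨h1, h2⟩ := hx; obtain ⟨g1, g2⟩ := hy
      constructor
      · simp only [map_add, h1, g1, add_zero]
      · simp only [map_add]
        calc eps K A (-1) (dOm K A x) + eps K A (-1) (dOm K A y) +
              (dOm K A (eps K A (-1) x) + dOm K A (eps K A (-1) y))
            = (eps K A (-1) (dOm K A x) + dOm K A (eps K A (-1) x)) +
              (eps K A (-1) (dOm K A y) + dOm K A (eps K A (-1) y)) := by abel
          _ = 0 := by rw [h2, g2, add_zero]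
  | hmul x y hx hy =>
      obtain ⟨h1, h2⟩ := hx; obtain ⟨g1, g2⟩ := hy
      constructor
      · rw [dOm_mul, map_add, dOm_mul, dOm_mul, h1, g1, zero_mul, mul_zero, add_zero,
          zero_add, ← add_mul, h2, zero_mul]
      · rw [dOm_mul, map_add, map_mul (eps K A (-1)) (dOm K A x) y,
          map_mul (eps K A (-1)) (eps K A (-1) x) (dOm K A y),
          map_mul (eps K A (-1)) x y, dOm_mul]
        have rearr : ∀ a1 a2 a3 b1 b2 b3 : Omega K A,
            a1 * b1 + a2 * b2 + (a3 * b1 + a2 * b3) = (a1 + a3) * b1 + a2 * (b2 + b3) := by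
          intros; noncomm_ring
        rw [rearr, h2, g2, zero_mul, mul_zero, add_zero]

section Mon

/-- Monomial `a₀ d a₁ ⋯ d aₙ`. -/
def Mon (a : A) (l : List A) : Omega K A := jA K A a * (l.map (dA K A)).prod

lemma mon_mem (a : A) (l : List A) : Mon K A a l ∈ OmegaDeg K A l.length :=
  Submodule.subset_span ⟨a, l, rfl, rfl⟩

lemma span_map_le {s : Set (Omega K A)} {φ : Omega K A →ₗ[K] Omega K A}
    {p : Submodule K (Omega K A)} (h : ∀ x ∈ s, φ x ∈ p) :
    ∀ x ∈ Submodule.span K s, φ x ∈ p := by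
  intro x hx
  have h2 : Submodule.span K s ≤ Submodule.comap φ p :=
    Submodule.span_le.mpr fun y hy => h y hy
  exact h2 hx

lemma mul_dA_mem {n : ℕ} {x : Omega K A} (hx : x ∈ OmegaDeg K A n) (b : A) :
    x * dA K A b ∈ OmegaDeg K A (n + 1) := by
  refine span_map_le K A (φ := LinearMap.mulRight K (dA K A b)) ?_ x hx
  rintro y ⟨a, l, rfl, rfl⟩
  have e : LinearMap.mulRight K (dA K A b) (jA K A a * (l.map (dA K A)).prod)
      = Mon K A a (l ++ [b]) := by
    simp [Mon, mul_assoc]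
  rw [e]
  simpa using mon_mem K A a (l ++ [b])

lemma mon_mul_jA (a : A) (l : List A) :
    ∀ b : A, Mon K A a l * jA K A b ∈ OmegaDeg K A l.length := by
  induction l using List.reverseRecOn with
  | nil =>
      intro b
      have e : Mon K A a [] * jA K A b = Mon K A (a * b) [] := by
        simp [Mon, jA_mul]
      rw [e]; exact mon_mem K A (a * b) []
  | append_singleton l c IH =>
      intro b
      have key : Mon K A a (l ++ [c]) * jA K A b + (Mon K A a l * jA K A c) * dA K A b
          = Mon K A a (l ++ [c * b]) := by
        simp only [Mon, List.map_append, List.prod_append, List.map_cons, List.map_nil,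
          List.prod_cons, List.prod_nil, mul_one]
        rw [dA_leibniz K A c b, mul_add]
        noncomm_ring
      have e2 := eq_sub_of_add_eq key
      rw [e2, osub_eq]
      refine Submodule.add_mem _ ?_ (Submodule.smul_mem _ _ ?_)
      · simpa using mon_mem K A a (l ++ [c * b])
      · simpa using mul_dA_mem K A (IH c) b

lemma mul_jA_mem {n : ℕ} {x : Omega K A} (hx : x ∈ OmegaDeg K A n) (b : A) :
    x * jA K A b ∈ OmegaDeg K A n := by
  refine span_map_le K A (φ := LinearMap.mulRight K (jA K A b)) ?_ x hx
  rintro y ⟨a, l, rfl, rfl⟩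
  simpa [Mon] using mon_mul_jA K A a l b

lemma mul_dlist_mem {n : ℕ} {x : Omega K A} (hx : x ∈ OmegaDeg K A n) :
    ∀ l : List A, x * (l.map (dA K A)).prod ∈ OmegaDeg K A (n + l.length) := by
  intro l
  induction l generalizing n x with
  | nil => simpa using hx
  | cons c t IH =>
      have h2 := IH (mul_dA_mem K A hx c)
      have e : x * ((c :: t).map (dA K A)).prod
          = (x * dA K A c) * (t.map (dA K A)).prod := by
        simp [mul_assoc]
      rw [e]
      have en : n + 1 + t.length = n + (c :: t).length := by simp [List.length_cons]; omega
      exact en ▸ h2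

lemma omul_mem {m n : ℕ} {x y : Omega K A} (hx : x ∈ OmegaDeg K A m)
    (hy : y ∈ OmegaDeg K A n) : x * y ∈ OmegaDeg K A (m + n) := by
  refine span_map_le K A (φ := LinearMap.mulLeft K x) ?_ y hy
  rintro z ⟨b, l, rfl, rfl⟩
  have e : LinearMap.mulLeft K x (jA K A b * (l.map (dA K A)).prod)
      = (x * jA K A b) * (l.map (dA K A)).prod := by
    simp [mul_assoc]
  rw [e]
  simpa using mul_dlist_mem K A (mul_jA_mem K A hx b) l

/-- The set of all monomials. -/
def MonSet : Set (Omega K A) := {x | ∃ a l, x = Mon K A a l}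

lemma omegaDeg_le_spanMon (n : ℕ) :
    OmegaDeg K A n ≤ Submodule.span K (MonSet K A) := by
  apply Submodule.span_mono
  rintro x ⟨a, l, -, rfl⟩
  exact ⟨a, l, rfl⟩

lemma mem_spanMon (x : Omega K A) : x ∈ Submodule.span K (MonSet K A) := by
  induction x using omega_induction with
  | halg r =>
      have h1 : (1 : Omega K A) = Mon K A 1 [] := by simp [Mon, jA_one]
      have h2 : algebraMap K (Omega K A) r = r • Mon K A 1 [] := by
        rw [← h1]; exact Algebra.algebraMap_eq_smul_one r
      rw [h2]
      exact Submodule.smul_mem _ _ (Submodule.subset_span ⟨1, [], rfl⟩)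
  | hj a =>
      have : jA K A a = Mon K A a [] := by simp [Mon]
      rw [this]; exact Submodule.subset_span ⟨a, [], rfl⟩
  | hd a =>
      have : dA K A a = Mon K A 1 [a] := by simp [Mon, jA_one]
      rw [this]; exact Submodule.subset_span ⟨1, [a], rfl⟩
  | hadd x y hx hy => exact Submodule.add_mem _ hx hy
  | hmul x y hx hy =>
      have step1 : ∀ a l, ∀ z ∈ Submodule.span K (MonSet K A),
          Mon K A a l * z ∈ Submodule.span K (MonSet K A) := by
        intro a l
        refine span_map_le K A (φ := LinearMap.mulLeft K (Mon K A a l)) ?_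
        rintro z ⟨b, m, rfl⟩
        have h0 := omul_mem K A (mon_mem K A a l) (mon_mem K A b m)
        refine omegaDeg_le_spanMon K A (l.length + m.length) ?_
        simpa [Mon, mul_assoc] using h0
      refine span_map_le K A (φ := LinearMap.mulRight K y) ?_ x hx
      rintro z ⟨a, l, rfl⟩
      simpa using step1 a l y hy

lemma spanMon_top : Submodule.span K (MonSet K A) = ⊤ :=
  eq_top_iff.mpr fun x _ => mem_spanMon K A x

lemma ext_mon {f g : Omega K A →ₗ[K] Omega K A}
    (h : ∀ a l, f (Mon K A a l) = g (Mon K A a l)) : f = g := by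
  refine LinearMap.ext_on (spanMon_top K A) ?_
  rintro x ⟨a, l, rfl⟩
  exact h a l

lemma eps_dlist (s : K) (l : List A) :
    eps K A s ((l.map (dA K A)).prod) = s ^ l.length • (l.map (dA K A)).prod := by
  induction l with
  | nil => simp [oone_smul]
  | cons c t IH =>
      have e : ((c :: t).map (dA K A)).prod = dA K A c * (t.map (dA K A)).prod := by simp
      rw [e, map_mul, eps_dA, IH, osmul_mul K A, omul_smul K A, osmul_smul K A, ← pow_succ']
      rw [List.length_cons]

lemma eps_mon (s : K) (a : A) (l : List A) :
    eps K A s (Mon K A a l) = s ^ l.length • Mon K A a l := by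
  rw [Mon, map_mul, eps_jA, eps_dlist K A s l, omul_smul K A]

lemma eps_of_mem (s : K) {n : ℕ} {x : Omega K A} (hx : x ∈ OmegaDeg K A n) :
    eps K A s x = s ^ n • x := by
  have h : Set.EqOn (⇑(eps K A s).toLinearMap)
      (⇑((s ^ n) • (LinearMap.id (R := K) (M := Omega K A))))
      {x | ∃ (a : A) (l : List A), l.length = n ∧ x = jA K A a * (l.map (dA K A)).prod} := by
    rintro y ⟨a, l, rfl, rfl⟩
    have h1 := eps_mon K A s a l
    show eps K A s _ = (s ^ l.length • LinearMap.id) _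
    rw [lsmul_apply K A]
    simpa [Mon] using h1
  have h2 := LinearMap.eqOn_span h hx
  have h3 : ((s ^ n) • (LinearMap.id (R := K) (M := Omega K A))) x = s ^ n • x := by
    rw [lsmul_apply K A]; rfl
  rw [← h3]
  exact h2

end Mon

section Proj
open Polynomial

lemma oC_smul (c : K) (x : Omega K A) :
    Polynomial.C (c • x) = c • Polynomial.C x := (Polynomial.smul_C c x).symm

lemma ocoeff_smul (c : K) (p : Polynomial (Omega K A)) (n : ℕ) :
    (c • p).coeff n = c • p.coeff n := Polynomial.coeff_smul c p n

/-- Free version of the grading homomorphism `Ω(A) → Ω(A)[X]`, `jA a ↦ C (jA a)`,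
`dA a ↦ X · C (dA a)`. -/
def EFree : FreeAlgebra K (A ⊕ A) →ₐ[K] Polynomial (Omega K A) :=
  FreeAlgebra.lift K (Sum.elim (fun a => Polynomial.C (jA K A a))
    (fun a => Polynomial.X * Polynomial.C (dA K A a)))

lemma EFree_rel : ∀ ⦃x y : FreeAlgebra K (A ⊕ A)⦄, Rel K A x y →
    EFree K A x = EFree K A y := by
  rintro x y h
  cases h with
  | add_coe a b => simp [EFree, jA_add]
  | smul_coe c a =>
      have h0 : (EFree K A) (c • FreeAlgebra.ι K (Sum.inl a))
          = c • (EFree K A) (FreeAlgebra.ι K (Sum.inl a)) := map_smul _ _ _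
      rw [h0]
      simp only [EFree, FreeAlgebra.lift_ι_apply, Sum.elim_inl]
      rw [jA_smul, oC_smul K A]
  | mul_coe a b => simp [EFree, jA_mul]
  | one_coe => simp [EFree, jA_one]
  | add_d a b => simp [EFree, dA_add, mul_add, add_mul]
  | smul_d c a =>
      have h0 : (EFree K A) (c • FreeAlgebra.ι K (Sum.inr a))
          = c • (EFree K A) (FreeAlgebra.ι K (Sum.inr a)) := map_smul _ _ _
      rw [h0]
      simp only [EFree, FreeAlgebra.lift_ι_apply, Sum.elim_inr]
      rw [dA_smul, oC_smul K A, mul_smul_comm]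
  | leibniz a b =>
      simp only [EFree, map_mul, map_add, FreeAlgebra.lift_ι_apply, Sum.elim_inl, Sum.elim_inr]
      rw [dA_leibniz K A a b, map_add, map_mul, map_mul, mul_add]
      congr 1
      · rw [mul_assoc]
      · rw [Polynomial.X_mul, mul_assoc, Polynomial.X_mul]

/-- The grading homomorphism `Ω(A) → Ω(A)[X]`. -/
def EOm : Omega K A →ₐ[K] Polynomial (Omega K A) :=
  RingQuot.liftAlgHom K ⟨EFree K A, EFree_rel K A⟩

lemma EOm_jA (a : A) : EOm K A (jA K A a) = Polynomial.C (jA K A a) := by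
  rw [jA, EOm, RingQuot.liftAlgHom_mkAlgHom_apply]; simp [EFree, jA]

lemma EOm_dA (a : A) : EOm K A (dA K A a) = Polynomial.X * Polynomial.C (dA K A a) := by
  rw [dA, EOm, RingQuot.liftAlgHom_mkAlgHom_apply]; simp [EFree, dA]

/-- Projection onto the degree-`n` component of `Ω(A)`. -/
def pProj (n : ℕ) : Omega K A →ₗ[K] Omega K A where
  toFun x := (EOm K A x).coeff n
  map_add' x y := by
    show (EOm K A (x + y)).coeff n = (EOm K A x).coeff n + (EOm K A y).coeff n
    rw [map_add, Polynomial.coeff_add]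
  map_smul' c x := by
    show (EOm K A (c • x)).coeff n = c • (EOm K A x).coeff n
    rw [asmul K A, ocoeff_smul K A]

lemma EOm_dlist (l : List A) : EOm K A ((l.map (dA K A)).prod)
    = Polynomial.C ((l.map (dA K A)).prod) * Polynomial.X ^ l.length := by
  induction l with
  | nil => simp
  | cons c t IH =>
      have e : ((c :: t).map (dA K A)).prod = dA K A c * (t.map (dA K A)).prod := by simp
      rw [e, map_mul, EOm_dA, IH]
      calc Polynomial.X * Polynomial.C (dA K A c) *
            (Polynomial.C ((t.map (dA K A)).prod) * Polynomial.X ^ t.length)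
          = Polynomial.C (dA K A c) * Polynomial.X *
            (Polynomial.C ((t.map (dA K A)).prod) * Polynomial.X ^ t.length) := by
            rw [Polynomial.X_mul]
        _ = Polynomial.C (dA K A c) * (Polynomial.X * Polynomial.C ((t.map (dA K A)).prod))
              * Polynomial.X ^ t.length := by rw [mul_assoc, mul_assoc, mul_assoc]
        _ = Polynomial.C (dA K A c) * (Polynomial.C ((t.map (dA K A)).prod) * Polynomial.X)
              * Polynomial.X ^ t.length := by rw [Polynomial.X_mul]
        _ = Polynomial.C (dA K A c) * Polynomial.C ((t.map (dA K A)).prod) *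
              (Polynomial.X * Polynomial.X ^ t.length) := by
            rw [mul_assoc, mul_assoc, mul_assoc]
        _ = Polynomial.C ((dA K A c) * ((t.map (dA K A)).prod)) * Polynomial.X ^ (t.length + 1) := by
            rw [← map_mul, ← pow_succ']

lemma EOm_mon (a : A) (l : List A) :
    EOm K A (Mon K A a l) = Polynomial.C (Mon K A a l) * Polynomial.X ^ l.length := by
  rw [Mon, map_mul, EOm_jA, EOm_dlist K A l, ← mul_assoc, ← map_mul]

lemma pProj_mon (n : ℕ) (a : A) (l : List A) :
    pProj K A n (Mon K A a l) = if l.length = n then Mon K A a l else 0 := by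
  show (EOm K A (Mon K A a l)).coeff n = _
  rw [EOm_mon K A, Polynomial.C_mul_X_pow_eq_monomial, Polynomial.coeff_monomial]

lemma pProj_of_mem_eq {n : ℕ} {x : Omega K A} (hx : x ∈ OmegaDeg K A n) :
    pProj K A n x = x := by
  have heq : Set.EqOn (⇑(pProj K A n)) (⇑(LinearMap.id (R := K) (M := Omega K A)))
      {x | ∃ (a : A) (l : List A), l.length = n ∧ x = jA K A a * (l.map (dA K A)).prod} := by
    rintro y ⟨a, l, rfl, rfl⟩
    have h1 := pProj_mon K A l.length a l
    rw [if_pos rfl] at h1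
    simpa [Mon] using h1
  exact LinearMap.eqOn_span heq hx

lemma pProj_of_mem_ne {n m : ℕ} (hnm : m ≠ n) {x : Omega K A} (hx : x ∈ OmegaDeg K A m) :
    pProj K A n x = 0 := by
  have heq : Set.EqOn (⇑(pProj K A n)) (⇑(0 : Omega K A →ₗ[K] Omega K A))
      {x | ∃ (a : A) (l : List A), l.length = m ∧ x = jA K A a * (l.map (dA K A)).prod} := by
    rintro y ⟨a, l, rfl, rfl⟩
    have h1 := pProj_mon K A n a l
    rw [if_neg hnm] at h1
    simpa [Mon] using h1
  exact LinearMap.eqOn_span heq hx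

end Proj

section DegZ

lemma omegaDegZ_natCast (n : ℕ) : OmegaDegZ K A (n : ℤ) = OmegaDeg K A n := by
  rw [OmegaDegZ, if_pos (by positivity), Int.toNat_natCast]

lemma omegaDegZ_neg {n : ℤ} (h : n < 0) : OmegaDegZ K A n = ⊥ := by
  rw [OmegaDegZ, if_neg (by omega)]

lemma omegaDegZ_nonneg {n : ℤ} (h : 0 ≤ n) : OmegaDegZ K A n = OmegaDeg K A n.toNat := by
  rw [OmegaDegZ, if_pos h]

lemma mon_memZ (a : A) (l : List A) : Mon K A a l ∈ OmegaDegZ K A (l.length : ℤ) := by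
  rw [omegaDegZ_natCast]; exact mon_mem K A a l

lemma jA_memZ (a : A) : jA K A a ∈ OmegaDegZ K A 0 := by
  have : jA K A a = Mon K A a [] := by simp [Mon]
  rw [this]; exact mon_memZ K A a []

lemma one_memZ : (1 : Omega K A) ∈ OmegaDegZ K A 0 := by
  have : (1 : Omega K A) = Mon K A 1 [] := by simp [Mon, jA_one]
  rw [this]; exact mon_memZ K A 1 []

lemma dA_memZ (a : A) : dA K A a ∈ OmegaDegZ K A 1 := by
  have : dA K A a = Mon K A 1 [a] := by simp [Mon, jA_one]
  rw [this]; exact mon_memZ K A 1 [a]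

lemma omulZ_mem {p q : ℤ} {x y : Omega K A} (hx : x ∈ OmegaDegZ K A p)
    (hy : y ∈ OmegaDegZ K A q) : x * y ∈ OmegaDegZ K A (p + q) := by
  rcases lt_or_ge p 0 with hp | hp
  · rw [omegaDegZ_neg K A hp] at hx
    simp only [Submodule.mem_bot] at hx
    rw [hx, zero_mul]; exact Submodule.zero_mem _
  rcases lt_or_ge q 0 with hq | hq
  · rw [omegaDegZ_neg K A hq] at hy
    simp only [Submodule.mem_bot] at hy
    rw [hy, mul_zero]; exact Submodule.zero_mem _
  rw [omegaDegZ_nonneg K A hp] at hx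
  rw [omegaDegZ_nonneg K A hq] at hy
  rw [omegaDegZ_nonneg K A (by omega), Int.toNat_add hp hq]
  exact omul_mem K A hx hy

lemma eps_of_memZ (s : K) {n : ℤ} (hn : 0 ≤ n) {x : Omega K A}
    (hx : x ∈ OmegaDegZ K A n) : eps K A s x = s ^ n.toNat • x := by
  rw [omegaDegZ_nonneg K A hn] at hx
  exact eps_of_mem K A s hx

end DegZ

section Sign

lemma sg_mul_self (n : ℤ) : ((-1 : K) ^ n) * ((-1 : K) ^ n) = 1 := by
  rcases Int.even_or_odd n with h | h
  · rw [h.neg_one_zpow]; norm_num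
  · rw [h.neg_one_zpow]; norm_num

lemma sg_add (a b : ℤ) : ((-1 : K) ^ (a + b)) = (-1 : K) ^ a * (-1 : K) ^ b :=
  zpow_add₀ (by norm_num) a b

lemma sg_natCast_mul (m : ℤ) (j : ℕ) : ((-1 : K) ^ m) ^ j = (-1 : K) ^ (m * j) := by
  rw [← zpow_natCast ((-1 : K) ^ m) j, ← zpow_mul]

lemma sg_pred (m : ℤ) : ((-1 : K) ^ (m - 1)) = -((-1 : K) ^ m) := by
  rw [sub_eq_add_neg, sg_add]
  norm_num

end Sign

section Der

/-- Global twisted-Leibniz formulation of a graded derivation of degree `m`. -/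
def GDer (m : ℤ) (D : Omega K A →ₗ[K] Omega K A) : Prop :=
  (∀ n : ℕ, ∀ x ∈ OmegaDeg K A n, D x ∈ OmegaDegZ K A (m + n)) ∧
  (∀ x y, D (x * y) = D x * y + eps K A ((-1) ^ m) x * D y)

lemma isGDer_of_gder {m : ℤ} {D : Omega K A →ₗ[K] Omega K A} (h : GDer K A m D) :
    IsGDer K A m D := by
  constructor
  · intro n x hx
    rcases lt_or_ge n 0 with hn | hn
    · rw [omegaDegZ_neg K A hn] at hx
      simp only [Submodule.mem_bot] at hx
      rw [hx, map_zero]; exact Submodule.zero_mem _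
    · rw [omegaDegZ_nonneg K A hn] at hx
      have h2 := h.1 n.toNat x hx
      rwa [show m + (n.toNat : ℤ) = m + n by omega] at h2
  · intro n x y hx
    rcases lt_or_ge n 0 with hn | hn
    · rw [omegaDegZ_neg K A hn] at hx
      simp only [Submodule.mem_bot] at hx
      subst hx
      rw [zero_mul, map_zero, zero_mul, zero_mul, osmul_zero K A, add_zero]
    · have hx' : x ∈ OmegaDeg K A n.toNat := by rwa [omegaDegZ_nonneg K A hn] at hx
      rw [h.2 x y, eps_of_mem K A _ hx', sg_natCast_mul, osmul_mul K A,
        Int.toNat_of_nonneg hn]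

lemma gder_of_isGDer {m : ℤ} {D : Omega K A →ₗ[K] Omega K A} (h : IsGDer K A m D) :
    GDer K A m D := by
  constructor
  · intro n x hx
    have hx' : x ∈ OmegaDegZ K A (n : ℤ) := by rwa [omegaDegZ_natCast]
    exact h.1 n x hx'
  · intro x y
    have key : (D ∘ₗ LinearMap.mulRight K y)
        = (LinearMap.mulRight K y ∘ₗ D) +
          (LinearMap.mulRight K (D y) ∘ₗ (eps K A ((-1) ^ m)).toLinearMap) := by
      apply ext_mon K A
      intro a l
      simp only [LinearMap.comp_apply, LinearMap.add_apply, LinearMap.mulRight_apply,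
        AlgHom.toLinearMap_apply]
      rw [h.2 (l.length : ℤ) _ y (mon_memZ K A a l), eps_mon K A _ a l,
        sg_natCast_mul, osmul_mul K A]
    have := congrArg (fun f => f x) key
    simpa only [LinearMap.comp_apply, LinearMap.add_apply, LinearMap.mulRight_apply,
      AlgHom.toLinearMap_apply] using this

lemma dOm_dlist (l : List A) : dOm K A ((l.map (dA K A)).prod) = 0 := by
  induction l with
  | nil => simp
  | cons c t IH =>
      have e : ((c :: t).map (dA K A)).prod = dA K A c * (t.map (dA K A)).prod := by simp
      rw [e, dOm_mul, dOm_dA, IH, zero_mul, mul_zero, add_zero]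

lemma dOm_mon (a : A) (l : List A) : dOm K A (Mon K A a l) = Mon K A 1 (a :: l) := by
  have e : Mon K A 1 (a :: l) = dA K A a * (l.map (dA K A)).prod := by
    simp [Mon, jA_one]
  rw [Mon, dOm_mul, dOm_jA, dOm_dlist, mul_zero, add_zero, e]

lemma gder_dOm : GDer K A 1 (dOm K A) := by
  constructor
  · intro n x hx
    refine span_map_le K A (φ := dOm K A) ?_ x hx
    rintro y ⟨a, l, rfl, rfl⟩
    have e : dOm K A (jA K A a * (l.map (dA K A)).prod) = Mon K A 1 (a :: l) := by
      rw [← Mon, dOm_mon]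
    rw [e, omegaDegZ_nonneg K A (by omega)]
    have := mon_mem K A 1 (a :: l)
    have en : (a :: l).length = ((1 : ℤ) + l.length).toNat := by simp; omega
    rwa [en] at this
  · intro x y
    have e : ((-1 : K) ^ (1 : ℤ)) = -1 := zpow_one _
    rw [e]
    exact dOm_mul K A x y

lemma isGDer_dOm : IsGDer K A 1 (dOm K A) := isGDer_of_gder K A (gder_dOm K A)

lemma dd_zero (x : Omega K A) : dOm K A (dOm K A x) = 0 := (dd_eps K A x).1

/-- Two graded derivations of the same degree agreeing on `jA` and `dA` agree. -/
lemma gder_one {m : ℤ} {D : Omega K A →ₗ[K] Omega K A} (h : IsGDer K A m D) :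
    D (1 : Omega K A) = 0 := by
  have h0 := h.2 0 1 1 (one_memZ K A)
  rw [mul_one, mul_one, mul_zero, zpow_zero, oone_smul K A, one_mul] at h0
  exact left_eq_add.mp h0

lemma gder_ext {m : ℤ} {D1 D2 : Omega K A →ₗ[K] Omega K A}
    (h1 : IsGDer K A m D1) (h2 : IsGDer K A m D2)
    (hj : ∀ a, D1 (jA K A a) = D2 (jA K A a))
    (hd : ∀ a, D1 (dA K A a) = D2 (dA K A a)) : D1 = D2 := by
  have hprod : ∀ l : List A, D1 ((l.map (dA K A)).prod) = D2 ((l.map (dA K A)).prod) := by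
    intro l
    induction l with
    | nil => simp only [List.map_nil, List.prod_nil, gder_one K A h1, gder_one K A h2]
    | cons c t IH =>
        have e : ((c :: t).map (dA K A)).prod = dA K A c * (t.map (dA K A)).prod := by simp
        rw [e, h1.2 1 _ _ (dA_memZ K A c), h2.2 1 _ _ (dA_memZ K A c), IH, hd]
  apply ext_mon K A
  intro a l
  have e0 : Mon K A a l = jA K A a * (l.map (dA K A)).prod := rfl
  rw [e0, h1.2 0 _ _ (jA_memZ K A a), h2.2 0 _ _ (jA_memZ K A a), hj, hprod]

end Der

section Gcomm

lemma gcomm_apply (k1 k2 : ℤ) (D1 D2 : Omega K A →ₗ[K] Omega K A) (x : Omega K A) :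
    gcomm K A k1 k2 D1 D2 x = D1 (D2 x) - ((-1 : K) ^ (k1 * k2)) • D2 (D1 x) := by
  rw [gcomm, LinearMap.sub_apply, LinearMap.comp_apply, lsmul_apply K A, LinearMap.comp_apply]

lemma isGDer_gcomm {m1 m2 : ℤ} {D1 D2 : Omega K A →ₗ[K] Omega K A}
    (h1 : IsGDer K A m1 D1) (h2 : IsGDer K A m2 D2) :
    IsGDer K A (m1 + m2) (gcomm K A m1 m2 D1 D2) := by
  constructor
  · intro n x hx
    rw [gcomm_apply K A]
    refine Submodule.sub_mem _ ?_ (Submodule.smul_mem _ _ ?_)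
    · have h0 := h1.1 (m2 + n) _ (h2.1 n x hx)
      rwa [show m1 + (m2 + n) = m1 + m2 + n by ring] at h0
    · have h0 := h2.1 (m1 + n) _ (h1.1 n x hx)
      rwa [show m2 + (m1 + n) = m1 + m2 + n by ring] at h0
  · intro n x y hx
    rw [gcomm_apply K A, gcomm_apply K A, gcomm_apply K A]
    rw [h2.2 n x y hx, h1.2 n x y hx]
    simp only [map_add, lsmul K A]
    rw [h1.2 (m2 + n) _ y (h2.1 n x hx), h1.2 n x (D2 y) hx,
      h2.2 (m1 + n) _ y (h1.1 n x hx), h2.2 n x (D1 y) hx]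
    simp only [osmul_add K A, osmul_smul K A, osub_mul K A, osmul_mul K A, omul_smul K A,
      omul_sub K A, osmul_sub K A]
    rw [show m1 * (m2 + n) = m1 * m2 + m1 * n by ring,
      show m2 * (m1 + n) = m1 * m2 + m2 * n by ring,
      show (m1 + m2) * n = m1 * n + m2 * n by ring,
      sg_add K (m1 * m2) (m1 * n), sg_add K (m1 * m2) (m2 * n), sg_add K (m1 * n) (m2 * n)]
    rcases Int.even_or_odd (m1 * m2) with e12 | e12 <;>
      rcases Int.even_or_odd (m1 * n) with e1 | e1 <;>
        rcases Int.even_or_odd (m2 * n) with e2 | e2 <;>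
          simp only [e12.neg_one_zpow, e1.neg_one_zpow, e2.neg_one_zpow] <;>
            module

lemma isGDer_smul (c : K) {m : ℤ} {D : Omega K A →ₗ[K] Omega K A} (h : IsGDer K A m D) :
    IsGDer K A m (c • D) := by
  constructor
  · intro n x hx
    rw [lsmul_apply K A]
    exact Submodule.smul_mem _ _ (h.1 n x hx)
  · intro n x y hx
    rw [lsmul_apply K A, lsmul_apply K A, lsmul_apply K A, h.2 n x y hx,
      osmul_add K A, osmul_mul K A, osmul_smul K A, mul_comm c, ← osmul_smul K A,
      omul_smul K A]

lemma isGDer_add {m : ℤ} {D E : Omega K A →ₗ[K] Omega K A}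
    (hD : IsGDer K A m D) (hE : IsGDer K A m E) : IsGDer K A m (D + E) := by
  constructor
  · intro n x hx
    rw [LinearMap.add_apply]
    exact Submodule.add_mem _ (hD.1 n x hx) (hE.1 n x hx)
  · intro n x y hx
    rw [LinearMap.add_apply, LinearMap.add_apply, LinearMap.add_apply,
      hD.2 n x y hx, hE.2 n x y hx, add_mul, mul_add, osmul_add K A]
    abel

lemma gcomm_swap (k l : ℤ) (D E : Omega K A →ₗ[K] Omega K A) :
    gcomm K A l k E D = (-((-1 : K) ^ (k * l))) • gcomm K A k l D E := by
  ext x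
  rw [lsmul_apply K A, gcomm_apply K A, gcomm_apply K A, show l * k = k * l by ring]
  rcases Int.even_or_odd (k * l) with e | e <;>
    simp only [e.neg_one_zpow] <;> module

lemma gcomm_jacobi (k l m : ℤ) (D E F : Omega K A →ₗ[K] Omega K A) :
    gcomm K A k (l + m) D (gcomm K A l m E F)
      = gcomm K A (k + l) m (gcomm K A k l D E) F
        + ((-1 : K) ^ (k * l)) • gcomm K A l (k + m) E (gcomm K A k m D F) := by
  ext x
  simp only [LinearMap.add_apply, lsmul_apply K A, gcomm_apply K A, olmap_sub K A,
    lsmul K A, osmul_sub K A, osmul_smul K A]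
  rw [show k * (l + m) = k * l + k * m by ring,
    show (k + l) * m = k * m + l * m by ring,
    show l * (k + m) = k * l + l * m by ring,
    sg_add K (k * l) (k * m), sg_add K (k * m) (l * m), sg_add K (k * l) (l * m)]
  rcases Int.even_or_odd (k * l) with e1 | e1 <;>
    rcases Int.even_or_odd (k * m) with e2 | e2 <;>
      rcases Int.even_or_odd (l * m) with e3 | e3 <;>
        simp only [e1.neg_one_zpow, e2.neg_one_zpow, e3.neg_one_zpow] <;>
          module

end Gcomm

section JConstr

open Matrix in
/-- Auxiliary algebra homomorphism defining the algebraic derivation `j` with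
`j (jA a) = 0`, `j (dA a) = D (jA a)`, with parity twist `s` in degree one. -/
def JThetaFree (s : K) (D : Omega K A →ₗ[K] Omega K A) :
    FreeAlgebra K (A ⊕ A) →ₐ[K] Matrix (Fin 2) (Fin 2) (Omega K A) :=
  FreeAlgebra.lift K (Sum.elim
    (fun a => !![jA K A a, 0; 0, jA K A a])
    (fun a => !![s • dA K A a, D (jA K A a); 0, dA K A a]))

lemma JThetaFree_rel (s : K) (D : Omega K A →ₗ[K] Omega K A)
    (hmul : ∀ a b : A, D (jA K A (a * b))
      = D (jA K A a) * jA K A b + jA K A a * D (jA K A b)) :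
    ∀ ⦃x y : FreeAlgebra K (A ⊕ A)⦄, Rel K A x y →
      JThetaFree K A s D x = JThetaFree K A s D y := by
  rintro x y h
  cases h with
  | add_coe a b =>
      ext i j
      fin_cases i <;> fin_cases j <;>
        simp [JThetaFree, jA_add, map_add]
  | smul_coe c a =>
      ext i j
      fin_cases i <;> fin_cases j <;>
        simp [JThetaFree, jA_smul, map_smul]
  | mul_coe a b =>
      ext i j
      fin_cases i <;> fin_cases j <;>
        simp [JThetaFree, jA_mul, Matrix.mul_apply, Fin.sum_univ_two]
  | one_coe =>
      ext i j
      fin_cases i <;> fin_cases j <;>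
        simp [JThetaFree, jA_one, Matrix.one_apply]
  | add_d a b =>
      ext i j
      fin_cases i <;> fin_cases j <;>
        simp [JThetaFree, dA_add, jA_add, map_add, osmul_add K A]
  | smul_d c a =>
      ext i j
      fin_cases i <;> fin_cases j <;>
        simp [JThetaFree, dA_smul, jA_smul, map_smul, osmul_smul K A, mul_comm]
  | leibniz a b =>
      ext i j
      fin_cases i <;> fin_cases j <;>
        simp [JThetaFree, Matrix.mul_apply, Fin.sum_univ_two, dA_leibniz, hmul,
          osmul_mul K A, omul_smul K A, osmul_add K A]

/-- The matrix homomorphism on `Ω(A)`. -/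
def JTheta (s : K) (D : Omega K A →ₗ[K] Omega K A)
    (hmul : ∀ a b : A, D (jA K A (a * b))
      = D (jA K A a) * jA K A b + jA K A a * D (jA K A b)) :
    Omega K A →ₐ[K] Matrix (Fin 2) (Fin 2) (Omega K A) :=
  RingQuot.liftAlgHom K ⟨JThetaFree K A s D, JThetaFree_rel K A s D hmul⟩

variable {s : K} {D : Omega K A →ₗ[K] Omega K A}
  (hmul : ∀ a b : A, D (jA K A (a * b))
      = D (jA K A a) * jA K A b + jA K A a * D (jA K A b))

lemma JTheta_jA (a : A) :
    JTheta K A s D hmul (jA K A a) = !![jA K A a, 0; 0, jA K A a] := by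
  rw [jA, JTheta, RingQuot.liftAlgHom_mkAlgHom_apply]; simp [JThetaFree, jA]

lemma JTheta_dA (a : A) :
    JTheta K A s D hmul (dA K A a) = !![s • dA K A a, D (jA K A a); 0, dA K A a] := by
  rw [dA, JTheta, RingQuot.liftAlgHom_mkAlgHom_apply]; simp [JThetaFree, jA, dA]

lemma JTheta_entries (x : Omega K A) :
    JTheta K A s D hmul x 1 0 = 0 ∧ JTheta K A s D hmul x 1 1 = x ∧
      JTheta K A s D hmul x 0 0 = eps K A s x := by
  induction x using omega_induction with
  | halg r =>
      rw [AlgHom.commutes, AlgHom.commutes]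
      simp [Matrix.algebraMap_matrix_apply]
  | hj a => simp [JTheta_jA K A hmul]
  | hd a => simp [JTheta_dA K A hmul]
  | hadd x y hx hy =>
      obtain ⟨h1, h2, h3⟩ := hx; obtain ⟨g1, g2, g3⟩ := hy
      simp [map_add, Matrix.add_apply, h1, h2, h3, g1, g2, g3]
  | hmul x y hx hy =>
      obtain ⟨h1, h2, h3⟩ := hx; obtain ⟨g1, g2, g3⟩ := hy
      simp [map_mul, Matrix.mul_apply, Fin.sum_univ_two, h1, h2, h3, g1, g2, g3]

/-- The algebraic graded derivation associated to the data `D`. -/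
def jOp (s : K) (D : Omega K A →ₗ[K] Omega K A)
    (hmul : ∀ a b : A, D (jA K A (a * b))
      = D (jA K A a) * jA K A b + jA K A a * D (jA K A b)) :
    Omega K A →ₗ[K] Omega K A where
  toFun x := JTheta K A s D hmul x 0 1
  map_add' x y := by
    show JTheta K A s D hmul (x + y) 0 1 = _
    rw [map_add, Matrix.add_apply]
  map_smul' c x := by
    show JTheta K A s D hmul (c • x) 0 1 = c • JTheta K A s D hmul x 0 1
    rw [asmul K A, Matrix.smul_apply]

lemma jOp_apply (x : Omega K A) : jOp K A s D hmul x = JTheta K A s D hmul x 0 1 := rfl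

lemma jOp_jA (a : A) : jOp K A s D hmul (jA K A a) = 0 := by
  rw [jOp_apply, JTheta_jA K A hmul]; simp

lemma jOp_dA (a : A) : jOp K A s D hmul (dA K A a) = D (jA K A a) := by
  rw [jOp_apply, JTheta_dA K A hmul]; simp

lemma jOp_one : jOp K A s D hmul (1 : Omega K A) = 0 := by
  have h0 := jOp_jA K A (s := s) hmul (1 : A)
  rwa [jA_one] at h0

lemma jOp_mul (x y : Omega K A) :
    jOp K A s D hmul (x * y)
      = jOp K A s D hmul x * y + eps K A s x * jOp K A s D hmul y := by
  rw [jOp_apply, map_mul, Matrix.mul_apply, Fin.sum_univ_two, ← jOp_apply, ← jOp_apply,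
    (JTheta_entries K A hmul x).2.2, (JTheta_entries K A hmul y).2.1]
  exact add_comm _ _

lemma jOp_dlist_mem {m : ℤ} (hs : s = (-1 : K) ^ m)
    (hdeg : ∀ a : A, D (jA K A a) ∈ OmegaDegZ K A (m + 1)) (l : List A) :
    jOp K A s D hmul ((l.map (dA K A)).prod) ∈ OmegaDegZ K A (m + l.length) := by
  induction l with
  | nil =>
      simp only [List.map_nil, List.prod_nil, jOp_one K A hmul]
      exact Submodule.zero_mem _
  | cons c t IH =>
      have e : ((c :: t).map (dA K A)).prod = dA K A c * (t.map (dA K A)).prod := by simp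
      rw [e, jOp_mul K A hmul, jOp_dA K A hmul, eps_dA]
      refine Submodule.add_mem _ ?_ ?_
      · have h0 := omulZ_mem K A (hdeg c) (mon_memZ K A 1 t)
        have e2 : Mon K A 1 t = (t.map (dA K A)).prod := by simp [Mon, jA_one]
        rw [e2] at h0
        rwa [show (m + 1) + (t.length : ℤ) = m + (c :: t).length by simp; ring] at h0
      · rw [osmul_mul K A]
        refine Submodule.smul_mem _ _ ?_
        have h0 := omulZ_mem K A (dA_memZ K A c) IH
        rwa [show (1 : ℤ) + (m + t.length) = m + (c :: t).length by simp; ring] at h0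

lemma gder_jOp {m : ℤ} (hs : s = (-1 : K) ^ m)
    (hdeg : ∀ a : A, D (jA K A a) ∈ OmegaDegZ K A (m + 1)) :
    GDer K A m (jOp K A s D hmul) := by
  constructor
  · intro n x hx
    refine span_map_le K A (φ := jOp K A s D hmul) ?_ x hx
    rintro y ⟨a, l, rfl, rfl⟩
    have e : jA K A a * (l.map (dA K A)).prod = Mon K A a l := rfl
    rw [e, Mon, jOp_mul K A hmul, jOp_jA K A hmul, zero_mul, zero_add, eps_jA]
    have h0 := omulZ_mem K A (jA_memZ K A a) (jOp_dlist_mem K A hmul hs hdeg l)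
    rwa [show (0 : ℤ) + (m + l.length) = m + l.length by ring] at h0
  · intro x y
    rw [jOp_mul K A hmul, hs]

lemma alg_jOp : IsAlgebraic K A (jOp K A s D hmul) := by
  intro x hx
  rw [show (0 : ℤ) = ((0 : ℕ) : ℤ) by rfl, omegaDegZ_natCast] at hx
  have heq : Set.EqOn (⇑(jOp K A s D hmul)) (⇑(0 : Omega K A →ₗ[K] Omega K A))
      {x | ∃ (a : A) (l : List A), l.length = 0 ∧ x = jA K A a * (l.map (dA K A)).prod} := by
    rintro y ⟨a, l, hl, rfl⟩
    rw [List.length_eq_zero_iff] at hl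
    subst hl
    simpa using jOp_jA K A hmul a
  exact LinearMap.eqOn_span heq hx

end JConstr

section Pairs

lemma jpair_unique {k : ℤ} {f D D' : Omega K A →ₗ[K] Omega K A}
    (h : JPair K A k f D) (h' : JPair K A k f D') : D = D' := by
  apply gder_ext K A h.2.1 h'.2.1
  · intro a
    rw [h.2.2.1 _ (jA_memZ K A a), h'.2.2.1 _ (jA_memZ K A a)]
  · intro a
    rw [h.2.2.2 _ (dA_memZ K A a), h'.2.2.2 _ (dA_memZ K A a)]

lemma lpair_unique {k : ℤ} {f L L' : Omega K A →ₗ[K] Omega K A}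
    (h : LPair K A k f L) (h' : LPair K A k f L') : L = L' := by
  obtain ⟨D, hD, rfl⟩ := h
  obtain ⟨D', hD', rfl⟩ := h'
  rw [jpair_unique K A hD hD']

lemma lpair_isGDer {k : ℤ} {f L : Omega K A →ₗ[K] Omega K A} (h : LPair K A k f L) :
    IsGDer K A k L := by
  obtain ⟨D, hD, rfl⟩ := h
  have h0 := isGDer_gcomm K A hD.2.1 (isGDer_dOm K A)
  rwa [show k - 1 + 1 = k by ring] at h0

lemma lpair_d_comm {k : ℤ} {f L : Omega K A →ₗ[K] Omega K A} (h : LPair K A k f L) :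
    ∀ x, L (dOm K A x) = ((-1 : K) ^ k) • dOm K A (L x) := by
  obtain ⟨D, hD, rfl⟩ := h
  intro x
  rw [gcomm_apply K A, gcomm_apply K A, dd_zero K A, map_zero, olmap_sub K A, lsmul K A,
    dd_zero K A, osmul_zero K A, show (k - 1) * 1 = k - 1 by ring, sg_pred K]
  module

lemma gcomm_d_comm {k l : ℤ} {Lf Lg : Omega K A →ₗ[K] Omega K A}
    (hfc : ∀ x, Lf (dOm K A x) = ((-1 : K) ^ k) • dOm K A (Lf x))
    (hgc : ∀ x, Lg (dOm K A x) = ((-1 : K) ^ l) • dOm K A (Lg x)) :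
    ∀ x, (gcomm K A k l Lf Lg) (dOm K A x)
      = ((-1 : K) ^ (k + l)) • dOm K A (gcomm K A k l Lf Lg x) := by
  intro x
  rw [gcomm_apply K A, gcomm_apply K A, hgc, lsmul K A, hfc, hfc, lsmul K A, hgc,
    olmap_sub K A, lsmul K A, sg_add K k l]
  simp only [osmul_sub K A, osmul_smul K A]
  module

lemma dcomm_zero {k : ℤ} {L : Omega K A →ₗ[K] Omega K A}
    (hcomm : ∀ x, L (dOm K A x) = ((-1 : K) ^ k) • dOm K A (L x)) :
    gcomm K A k 1 L (dOm K A) = 0 := by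
  ext x
  rw [gcomm_apply K A, hcomm, show k * 1 = k by ring, LinearMap.zero_apply]
  exact sub_self _

lemma statement13_part1 {k l : ℤ} {f g Lf Lg : Omega K A →ₗ[K] Omega K A}
    (hf : LPair K A k f Lf) (hg : LPair K A l g Lg) :
    gcomm K A (k + l) 1 (gcomm K A k l Lf Lg) (dOm K A) = 0 :=
  dcomm_zero K A (gcomm_d_comm K A (lpair_d_comm K A hf) (lpair_d_comm K A hg))

lemma ofv_smul (c : K) {m : ℤ} {φ : Omega K A →ₗ[K] Omega K A}
    (h : IsOneFormValued K A m φ) : IsOneFormValued K A m (c • φ) := by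
  refine ⟨fun n hn ω hω => ?_, fun ω hω => ?_, fun a ω hω => ⟨?_, ?_⟩⟩
  · rw [lsmul_apply K A, h.1 n hn ω hω, osmul_zero K A]
  · rw [lsmul_apply K A]; exact Submodule.smul_mem _ _ (h.2.1 ω hω)
  · rw [lsmul_apply K A, lsmul_apply K A, (h.2.2 a ω hω).1, omul_smul K A]
  · rw [lsmul_apply K A, lsmul_apply K A, (h.2.2 a ω hω).2, osmul_mul K A]

lemma ofv_add {m : ℤ} {φ ψ : Omega K A →ₗ[K] Omega K A}
    (h : IsOneFormValued K A m φ) (h' : IsOneFormValued K A m ψ) :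
    IsOneFormValued K A m (φ + ψ) := by
  refine ⟨fun n hn ω hω => ?_, fun ω hω => ?_, fun a ω hω => ⟨?_, ?_⟩⟩
  · rw [LinearMap.add_apply, h.1 n hn ω hω, h'.1 n hn ω hω, add_zero]
  · rw [LinearMap.add_apply]; exact Submodule.add_mem _ (h.2.1 ω hω) (h'.2.1 ω hω)
  · rw [LinearMap.add_apply, LinearMap.add_apply, (h.2.2 a ω hω).1, (h'.2.2 a ω hω).1,
      mul_add]
  · rw [LinearMap.add_apply, LinearMap.add_apply, (h.2.2 a ω hω).2, (h'.2.2 a ω hω).2,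
      add_mul]

lemma gcomm_smul_left (c : K) (k1 k2 : ℤ) (D E : Omega K A →ₗ[K] Omega K A) :
    gcomm K A k1 k2 (c • D) E = c • gcomm K A k1 k2 D E := by
  ext x
  simp only [gcomm_apply K A, lsmul_apply K A, lsmul K A, osmul_sub K A, osmul_smul K A]
  module

lemma gcomm_add_left (k1 k2 : ℤ) (D D' E : Omega K A →ₗ[K] Omega K A) :
    gcomm K A k1 k2 (D + D') E = gcomm K A k1 k2 D E + gcomm K A k1 k2 D' E := by
  ext x
  simp only [gcomm_apply K A, LinearMap.add_apply, map_add, osmul_add K A]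
  module

lemma jpair_smul (c : K) {m : ℤ} {φ D : Omega K A →ₗ[K] Omega K A}
    (h : JPair K A m φ D) : JPair K A m (c • φ) (c • D) := by
  refine ⟨ofv_smul K A c h.1, isGDer_smul K A c h.2.1, fun x hx => ?_, fun ω hω => ?_⟩
  · rw [lsmul_apply K A, h.2.2.1 x hx, osmul_zero K A]
  · rw [lsmul_apply K A, lsmul_apply K A, h.2.2.2 ω hω]

lemma jpair_add {m : ℤ} {φ ψ D E : Omega K A →ₗ[K] Omega K A}
    (h : JPair K A m φ D) (h' : JPair K A m ψ E) : JPair K A m (φ + ψ) (D + E) := by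
  refine ⟨ofv_add K A h.1 h'.1, isGDer_add K A h.2.1 h'.2.1, fun x hx => ?_, fun ω hω => ?_⟩
  · rw [LinearMap.add_apply, h.2.2.1 x hx, h'.2.2.1 x hx, add_zero]
  · rw [LinearMap.add_apply, LinearMap.add_apply, h.2.2.2 ω hω, h'.2.2.2 ω hω]

lemma lpair_smul (c : K) {m : ℤ} {φ L : Omega K A →ₗ[K] Omega K A}
    (h : LPair K A m φ L) : LPair K A m (c • φ) (c • L) := by
  obtain ⟨D, hD, rfl⟩ := h
  exact ⟨c • D, jpair_smul K A c hD, (gcomm_smul_left K A c _ _ _ _).symm⟩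

lemma lpair_add {m : ℤ} {φ ψ L M : Omega K A →ₗ[K] Omega K A}
    (h : LPair K A m φ L) (h' : LPair K A m ψ M) : LPair K A m (φ + ψ) (L + M) := by
  obtain ⟨D, hD, rfl⟩ := h
  obtain ⟨E, hE, rfl⟩ := h'
  exact ⟨D + E, jpair_add K A hD hE, (gcomm_add_left K A _ _ _ _ _).symm⟩

/-- The value of `f` on `dA a` is determined by the Lie derivative. -/
lemma lpair_val {m : ℤ} {φ L : Omega K A →ₗ[K] Omega K A} (h : LPair K A m φ L)
    (a : A) : φ (dA K A a) = L (jA K A a) := by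
  obtain ⟨D, hD, rfl⟩ := h
  rw [gcomm_apply K A, dOm_jA, hD.2.2.1 _ (jA_memZ K A a), map_zero, osmul_zero K A,
    sub_zero, hD.2.2.2 _ (dA_memZ K A a)]

lemma one_form_determined {m : ℤ} {φ φ' L : Omega K A →ₗ[K] Omega K A}
    (h : LPair K A m φ L) (h' : LPair K A m φ' L) : φ = φ' := by
  have hofv := h.choose_spec.1.1
  have hofv' := h'.choose_spec.1.1
  apply ext_mon K A
  intro a l
  match l with
  | [] =>
      have h0 : Mon K A a [] ∈ OmegaDegZ K A 0 := mon_memZ K A a []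
      rw [hofv.1 0 (by norm_num) _ h0, hofv'.1 0 (by norm_num) _ h0]
  | [b] =>
      have e : Mon K A a [b] = jA K A a * dA K A b := by simp [Mon]
      rw [e, (hofv.2.2 a _ (dA_memZ K A b)).1, (hofv'.2.2 a _ (dA_memZ K A b)).1,
        lpair_val K A h b, lpair_val K A h' b]
  | b :: c :: t =>
      have h0 : Mon K A a (b :: c :: t) ∈ OmegaDegZ K A ((b :: c :: t).length : ℤ) :=
        mon_memZ K A a _
      have hn : ((b :: c :: t).length : ℤ) ≠ 1 := by simp; omega
      rw [hofv.1 _ hn _ h0, hofv'.1 _ hn _ h0]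

end Pairs

section Existence

lemma fnb_exists {k l : ℤ} {f g Lf Lg : Omega K A →ₗ[K] Omega K A}
    (hf : LPair K A k f Lf) (hg : LPair K A l g Lg) :
    ∃ h, FNB K A k l f g h := by
  have hD : IsGDer K A (k + l) (gcomm K A k l Lf Lg) :=
    isGDer_gcomm K A (lpair_isGDer K A hf) (lpair_isGDer K A hg)
  set D : Omega K A →ₗ[K] Omega K A := gcomm K A k l Lf Lg with hDdef
  have hmulD : ∀ a b : A, D (jA K A (a * b))
      = D (jA K A a) * jA K A b + jA K A a * D (jA K A b) := by
    intro a b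
    have h0 := hD.2 0 (jA K A a) (jA K A b) (jA_memZ K A a)
    rw [← jA_mul] at h0
    rw [h0, mul_zero, zpow_zero, oone_smul K A]
  have hdegD : ∀ a : A, D (jA K A a) ∈ OmegaDegZ K A ((k + l - 1) + 1) := by
    intro a
    have h0 := hD.1 0 _ (jA_memZ K A a)
    rwa [show k + l + 0 = (k + l - 1) + 1 by ring] at h0
  have hDc : ∀ x, D (dOm K A x) = ((-1 : K) ^ (k + l)) • dOm K A (D x) :=
    gcomm_d_comm K A (lpair_d_comm K A hf) (lpair_d_comm K A hg)
  -- the algebraic derivation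
  set J : Omega K A →ₗ[K] Omega K A := jOp K A ((-1 : K) ^ (k + l - 1)) D hmulD with hJdef
  have hJ : IsGDer K A (k + l - 1) J :=
    isGDer_of_gder K A (gder_jOp K A hmulD rfl hdegD)
  have hJ_jA : ∀ a : A, J (jA K A a) = 0 := fun a => jOp_jA K A hmulD a
  have hJ_dA : ∀ a : A, J (dA K A a) = D (jA K A a) := fun a => jOp_dA K A hmulD a
  have hJ_alg : IsAlgebraic K A J := alg_jOp K A hmulD
  set h : Omega K A →ₗ[K] Omega K A := J ∘ₗ pProj K A 1 with hhdef
  have hp1_eq : ∀ ω ∈ OmegaDegZ K A 1, pProj K A 1 ω = ω := by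
    intro ω hω
    rw [show (1 : ℤ) = ((1 : ℕ) : ℤ) from rfl, omegaDegZ_natCast] at hω
    exact pProj_of_mem_eq K A hω
  have hp1_ne : ∀ n : ℤ, n ≠ 1 → ∀ ω ∈ OmegaDegZ K A n, pProj K A 1 ω = 0 := by
    intro n hn ω hω
    rcases lt_or_ge n 0 with hneg | hpos
    · rw [omegaDegZ_neg K A hneg] at hω
      simp only [Submodule.mem_bot] at hω
      rw [hω, map_zero]
    · rw [omegaDegZ_nonneg K A hpos] at hω
      exact pProj_of_mem_ne K A (by omega) hω
  have hh_eq : ∀ ω ∈ OmegaDegZ K A 1, h ω = J ω := by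
    intro ω hω
    rw [LinearMap.comp_apply, hp1_eq ω hω]
  -- JPair (k+l) h J
  have hjp : JPair K A (k + l) h J := by
    refine ⟨⟨fun n hn ω hω => ?_, fun ω hω => ?_, fun a ω hω => ⟨?_, ?_⟩⟩, ?_, hJ_alg, ?_⟩
    · rw [LinearMap.comp_apply, hp1_ne n hn ω hω, map_zero]
    · rw [hh_eq ω hω]
      have h0 := hJ.1 1 ω hω
      rwa [show k + l - 1 + 1 = k + l by ring] at h0
    · have hmem : jA K A a * ω ∈ OmegaDegZ K A 1 := by
        have h0 := omulZ_mem K A (jA_memZ K A a) hω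
        rwa [zero_add] at h0
      rw [hh_eq _ hmem, hh_eq ω hω]
      have h0 := hJ.2 0 (jA K A a) ω (jA_memZ K A a)
      rw [h0, hJ_jA a, zero_mul, zero_add, mul_zero, zpow_zero, oone_smul K A]
    · have hmem : ω * jA K A a ∈ OmegaDegZ K A 1 := by
        have h0 := omulZ_mem K A hω (jA_memZ K A a)
        rwa [add_zero] at h0
      rw [hh_eq _ hmem, hh_eq ω hω]
      have h0 := hJ.2 1 ω (jA K A a) hω
      rw [h0, hJ_alg _ (jA_memZ K A a), mul_zero, osmul_zero K A, add_zero]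
    · exact (show IsGDer K A (k + l - 1) J from hJ)
    · intro ω hω
      exact (hh_eq ω hω).symm
  -- the Lie derivative of h
  have hLh : gcomm K A (k + l - 1) 1 J (dOm K A) = D := by
    have hLhg : IsGDer K A (k + l) (gcomm K A (k + l - 1) 1 J (dOm K A)) := by
      have h0 := isGDer_gcomm K A hJ (isGDer_dOm K A)
      rwa [show k + l - 1 + 1 = k + l by ring] at h0
    apply gder_ext K A hLhg hD
    · intro a
      rw [gcomm_apply K A, dOm_jA, hJ_jA a, map_zero, osmul_zero K A, sub_zero, hJ_dA a]
    · intro a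
      rw [gcomm_apply K A, dOm_dA, map_zero, zero_sub, hJ_dA a]
      have e1 : D (dA K A a) = ((-1 : K) ^ (k + l)) • dOm K A (D (jA K A a)) := by
        rw [← dOm_jA K A a]; exact hDc (jA K A a)
      rw [e1, show (k + l - 1) * 1 = (k + l) - 1 by ring, sg_pred K]
      module
  exact ⟨h, Lf, Lg, gcomm K A (k + l - 1) 1 J (dOm K A), hf, hg, ⟨J, hjp, rfl⟩, hLh⟩

end Existence

section Final

lemma fnb_unique {k l : ℤ} {f g Lf Lg h h' : Omega K A →ₗ[K] Omega K A}
    (hf : LPair K A k f Lf) (hg : LPair K A l g Lg)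
    (H : FNB K A k l f g h) (H' : FNB K A k l f g h') : h = h' := by
  obtain ⟨Lf1, Lg1, Lh1, hf1, hg1, hh1, he1⟩ := H
  obtain ⟨Lf2, Lg2, Lh2, hf2, hg2, hh2, he2⟩ := H'
  rw [lpair_unique K A hf1 hf, lpair_unique K A hg1 hg] at he1
  rw [lpair_unique K A hf2 hf, lpair_unique K A hg2 hg] at he2
  subst he1; subst he2
  exact one_form_determined K A hh1 hh2

end Final

/-- For bimodule homomorphisms `f : Ω₁(A) → Ω_k(A)` and
`g : Ω₁(A) → Ω_l(A)` one has `[[𝓛_f, 𝓛_g], d] = 0`; hence there is a unique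
`[f, g] ∈ Ω¹_{k+l}(A)`, the abstract Frölicher–Nijenhuis bracket, with
`𝓛([f,g]) = [𝓛(f), 𝓛(g)]`, and this bracket makes `Ω¹_*(A)` into a graded Lie
algebra. -/
theorem statement13 (K : Type) [Field K] [CharZero K] (A : Type) [Ring A] [Algebra K A]
    (k l : ℤ) (f g Lf Lg : Omega K A →ₗ[K] Omega K A)
    (hf : LPair K A k f Lf) (hg : LPair K A l g Lg) :
    (gcomm K A (k + l) 1 (gcomm K A k l Lf Lg) (dOm K A) = 0) ∧
    (∃! h : Omega K A →ₗ[K] Omega K A, FNB K A k l f g h) ∧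
    (∀ h h' : Omega K A →ₗ[K] Omega K A, FNB K A k l f g h → FNB K A l k g f h' →
      h' = -(((-1 : K) ^ (k * l)) • h)) ∧
    (∀ (m : ℤ) (e b_ge b_fg b_fe b₁ b₂ b₃ : Omega K A →ₗ[K] Omega K A),
      FNB K A l m g e b_ge → FNB K A k l f g b_fg → FNB K A k m f e b_fe →
      FNB K A k (l + m) f b_ge b₁ → FNB K A (k + l) m b_fg e b₂ →
      FNB K A l (k + m) g b_fe b₃ →
      b₁ = b₂ + ((-1 : K) ^ (k * l)) • b₃) := by
  refine ⟨statement13_part1 K A hf hg, ?_, ?_, ?_⟩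
  · obtain ⟨h₀, H₀⟩ := fnb_exists K A hf hg
    exact ⟨h₀, H₀, fun y hy => fnb_unique K A hf hg hy H₀⟩
  · intro h h' H H'
    obtain ⟨Lf1, Lg1, Lh1, hf1, hg1, hh1, he1⟩ := H
    rw [lpair_unique K A hf1 hf, lpair_unique K A hg1 hg] at he1
    subst he1
    have hc : FNB K A l k g f ((-((-1 : K) ^ (k * l))) • h) := by
      have hsm := lpair_smul K A (-((-1 : K) ^ (k * l))) hh1
      rw [show (k + l : ℤ) = l + k by ring] at hsm
      exact ⟨Lg, Lf, _, hg, hf, hsm, (gcomm_swap K A k l Lf Lg).symm⟩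
    have he := fnb_unique K A hg hf H' hc
    rw [he]
    exact neg_smul ((-1 : K) ^ (k * l)) h
  · intro m e b_ge b_fg b_fe b1 b2 b3 H_ge H_fg H_fe H1 H2 H3
    obtain ⟨Lg1, Le, Lbge, hg1, hle, hbge, hege⟩ := H_ge
    rw [lpair_unique K A hg1 hg] at hege
    subst hege
    obtain ⟨Lf1, Lg2, Lbfg, hf1, hg2, hbfg, hefg⟩ := H_fg
    rw [lpair_unique K A hf1 hf, lpair_unique K A hg2 hg] at hefg
    subst hefg
    obtain ⟨Lf2, Le2, Lbfe, hf2, hle2, hbfe, hefe⟩ := H_fe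
    rw [lpair_unique K A hf2 hf, lpair_unique K A hle2 hle] at hefe
    subst hefe
    obtain ⟨Lbfg', Le3, Lb2, hbfg', hle3, hb2, he2⟩ := H2
    rw [lpair_unique K A hbfg' hbfg, lpair_unique K A hle3 hle] at he2
    subst he2
    obtain ⟨Lg3, Lbfe', Lb3, hg3, hbfe', hb3, he3⟩ := H3
    rw [lpair_unique K A hg3 hg, lpair_unique K A hbfe' hbfe] at he3
    subst he3
    have h3' := lpair_smul K A ((-1 : K) ^ (k * l)) hb3
    have hsum := lpair_add K A
      ((show ((k + l) + m : ℤ) = k + (l + m) by ring) ▸ hb2)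
      ((show (l + (k + m) : ℤ) = k + (l + m) by ring) ▸ h3')
    have hFNB : FNB K A k (l + m) f b_ge (b2 + ((-1 : K) ^ (k * l)) • b3) :=
      ⟨Lf, gcomm K A l m Lg Le, _, hf, hbge, hsum,
        (gcomm_jacobi K A k l m Lf Lg Le).symm⟩
    exact fnb_unique K A hf hbge H1 hFNB

end NCDG
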